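/- If the m-degree of a set A contains a member that is not a cylinder, then the m-degree of A contains at least two distinct 1-degrees (it is not irreducible). -/
import Mathlib


/-- Many-one reducibility on subsets of ℕ. -/
def ManyOneRed (X Y : Set ℕ) : Prop :=
  ∃ f : ℕ → ℕ, Computable f ∧ ∀ x, x ∈ X ↔ f x ∈ Y

/-- Many-one equivalence. -/
def ManyOneEq (X Y : Set ℕ) : Prop := ManyOneRed X Y ∧ ManyOneRed Y X

/-- One-one reducibility on subsets of ℕ. -/
def OneOneRed (X Y : Set ℕ) : Prop :=
  ∃ f : ℕ → ℕ, Computable f ∧ Function.Injective f ∧ ∀ x, x ∈ X ↔ f x ∈ Y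

/-- One-one equivalence. -/
def OneOneEq (X Y : Set ℕ) : Prop := OneOneRed X Y ∧ OneOneRed Y X

/-- `A × ℕ` coded into ℕ via the standard computable pairing bijection. -/
def timesNat (A : Set ℕ) : Set ℕ :=
  {m | ∃ x ∈ A, ∃ n : ℕ, m = Nat.pair x n}

/-- `C` is a cylinder if `C ≡₁ A × ℕ` for some `A`. -/
def Cylinder (C : Set ℕ) : Prop := ∃ A : Set ℕ, OneOneEq C (timesNat A)

/-- `S` is computably enumerable: the domain of a partial computable function. -/
def CE (S : Set ℕ) : Prop :=
  ∃ ψ : ℕ →. ℕ, Partrec ψ ∧ ∀ x, x ∈ S ↔ (ψ x).Dom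

/-- pm-reducibility: `x ∈ X ↔ ψ(x)↓ ∧ ψ(x) ∈ Y` for a partial computable `ψ`. -/
def PmRed (X Y : Set ℕ) : Prop :=
  ∃ ψ : ℕ →. ℕ, Partrec ψ ∧ ∀ x, x ∈ X ↔ ∃ y ∈ ψ x, y ∈ Y

/-- pm-equivalence. -/
def PmEq (X Y : Set ℕ) : Prop := PmRed X Y ∧ PmRed Y X

/-- A simple set: c.e., with infinite complement containing no infinite c.e. subset. -/
def SimpleSet (S : Set ℕ) : Prop :=
  CE S ∧ Sᶜ.Infinite ∧ ∀ W : Set ℕ, W ⊆ Sᶜ → CE W → ¬ W.Infinite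

/-- A c.e. set `A` has a rigid complement: `Aᶜ` is infinite and any two
pm-equivalent subsets of `Aᶜ` have finite symmetric difference. -/
def RigidComplement (A : Set ℕ) : Prop :=
  Aᶜ.Infinite ∧ ∀ X Y : Set ℕ, X ⊆ Aᶜ → Y ⊆ Aᶜ → PmEq X Y → (symmDiff X Y).Finite

open Classical in
/-- Truth-table reducibility: a computable list of queries together with a
computable boolean truth-table evaluator. -/
def TTRed (X Y : Set ℕ) : Prop :=
  ∃ (q : ℕ → List ℕ) (t : ℕ → List Bool → Bool),
    Computable q ∧ Computable₂ t ∧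
      ∀ x, x ∈ X ↔ t x ((q x).map (fun n => decide (n ∈ Y))) = true

/-- Truth-table equivalence. -/
def TTEq (X Y : Set ℕ) : Prop := TTRed X Y ∧ TTRed Y X


lemma myManyOneRed_trans {X Y Z : Set ℕ} (h1 : ManyOneRed X Y) (h2 : ManyOneRed Y Z) :
    ManyOneRed X Z := by
  obtain ⟨f, hf, hfx⟩ := h1
  obtain ⟨g, hg, hgx⟩ := h2
  exact ⟨g ∘ f, hg.comp hf, fun x => (hfx x).trans (hgx (f x))⟩

lemma myTimesNatEq (C : Set ℕ) : ManyOneEq C (timesNat C) := by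
  constructor
  · refine ⟨fun x => Nat.pair x 0, ?_, ?_⟩
    · exact (Primrec₂.natPair.comp .id (Primrec.const 0)).to_comp
    · intro x
      constructor
      · intro hx; exact ⟨x, hx, 0, rfl⟩
      · rintro ⟨x', hx', n, hn⟩
        have := Nat.pair_eq_pair.mp hn.symm
        rwa [← this.1]
  · refine ⟨fun m => (Nat.unpair m).1, Computable.fst.comp Computable.unpair, ?_⟩
    intro m
    constructor
    · rintro ⟨x, hx, n, rfl⟩; simpa using hx
    · intro hm
      exact ⟨(Nat.unpair m).1, hm, (Nat.unpair m).2, (Nat.pair_unpair m).symm⟩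

theorem stmt19 (A : Set ℕ) (h : ∃ C : Set ℕ, ManyOneEq C A ∧ ¬ Cylinder C) :
    ∃ X Y : Set ℕ, ManyOneEq X A ∧ ManyOneEq Y A ∧ ¬ OneOneEq X Y := by
  obtain ⟨C, hCA, hC⟩ := h
  refine ⟨C, timesNat C, hCA, ?_, ?_⟩
  · exact ⟨myManyOneRed_trans (myTimesNatEq C).2 hCA.1,
      myManyOneRed_trans hCA.2 (myTimesNatEq C).1⟩
  · intro hone
    exact hC ⟨C, hone⟩
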